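/- Let (Ω, ℱ, P) be a probability space and let 𝓔 be a convex set of nonnegative (finite-valued) random variables on it. Then the extended-real-valued function φ(x) := sup_{g ∈ 𝓔} E[U(x g)] is concave on (0,∞): for all x₁, x₂ > 0 and t ∈ (0,1), φ(t x₁ + (1−t) x₂) ≥ t φ(x₁) + (1−t) φ(x₂) in the extended reals. -/

import Mathlib

open MeasureTheory Filter Set Topology
open scoped ENNReal

/-- The positive part of an extended real number, as an element of `ℝ≥0∞`. -/
noncomputable def erealPos (x : EReal) : ENNReal :=
  if x = ⊤ then ⊤ else ENNReal.ofReal x.toReal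

/-- Expectation of an extended-real-valued random variable `ξ`:
`E[ξ⁺] − E[ξ⁻]` when `E[ξ⁻] < ∞`, and `−∞` otherwise. -/
noncomputable def eexp {Ω : Type*} [MeasurableSpace Ω] (P : Measure Ω) (ξ : Ω → EReal) : EReal :=
  if (∫⁻ ω, erealPos (-(ξ ω)) ∂P) = ⊤ then ⊥
  else (∫⁻ ω, erealPos (ξ ω) ∂P).toEReal - (∫⁻ ω, erealPos (-(ξ ω)) ∂P).toEReal

/-- The utility function `U`, defined on `(0,∞)`, extended to `[0,∞)` by
`U(0) := lim_{x→0+} U(x)` (which equals the infimum since `U` is increasing),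
with values in the extended reals. -/
noncomputable def Uext (U : ℝ → ℝ) (x : ℝ) : EReal :=
  if 0 < x then ((U x : ℝ) : EReal) else ⨅ y : {y : ℝ // 0 < y}, ((U (y : ℝ) : ℝ) : EReal)

section Aux

lemma ereal_ne_top_cases (x : EReal) (h : x ≠ ⊤) : x = ⊥ ∨ ∃ r : ℝ, x = (r : EReal) := by
  induction x using EReal.rec with
  | bot => exact Or.inl rfl
  | coe r => exact Or.inr ⟨r, rfl⟩
  | top => exact absurd rfl h

lemma erealPos_top : erealPos ⊤ = ⊤ := if_pos rfl

lemma erealPos_bot : erealPos ⊥ = 0 := by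
  simp [erealPos]

lemma erealPos_coe (r : ℝ) : erealPos (r : EReal) = ENNReal.ofReal r := by
  simp [erealPos, EReal.coe_ne_top]

lemma erealPos_mono : Monotone erealPos := by
  intro x y h
  unfold erealPos
  split_ifs with hx hy hy
  · exact le_rfl
  · exact absurd (top_le_iff.1 (hx ▸ h)) hy
  · exact le_top
  · rcases eq_or_ne x ⊥ with rfl | hx'
    · simp
    · exact ENNReal.ofReal_le_ofReal (EReal.toReal_le_toReal h hx' hy)

lemma measurable_erealPos : Measurable erealPos :=
  erealPos_mono.measurable

lemma measurable_erealPosNeg : Measurable fun x : EReal => erealPos (-x) :=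
  Antitone.measurable (fun _ _ h => erealPos_mono (EReal.neg_le_neg_iff.2 h))

lemma erealPos_mul {c : ℝ} (hc : 0 < c) (x : EReal) :
    erealPos ((c : EReal) * x) = ENNReal.ofReal c * erealPos x := by
  induction x using EReal.rec with
  | bot => rw [EReal.coe_mul_bot_of_pos hc, erealPos_bot, mul_zero]
  | coe x => rw [← EReal.coe_mul, erealPos_coe, erealPos_coe, ENNReal.ofReal_mul hc.le]
  | top =>
      rw [EReal.coe_mul_top_of_pos hc, erealPos_top, ENNReal.mul_top]
      exact (ENNReal.ofReal_pos.2 hc).ne'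

lemma erealPos_neg_mul {c : ℝ} (hc : 0 < c) (x : EReal) :
    erealPos (-((c : EReal) * x)) = ENNReal.ofReal c * erealPos (-x) := by
  rw [← mul_neg, erealPos_mul hc]

lemma ofReal_max_zero (r : ℝ) : ENNReal.ofReal r = ENNReal.ofReal (max r 0) := by
  rcases le_total r 0 with h | h
  · rw [max_eq_right h, ENNReal.ofReal_of_nonpos h, ENNReal.ofReal_zero]
  · rw [max_eq_left h]

lemma max_zero_pt (r : ℝ) : max r 0 = r + max (-r) 0 := by
  rcases le_total r 0 with h | h
  · rw [max_eq_right h, max_eq_left (neg_nonneg.2 h)]; ring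
  · rw [max_eq_left h, max_eq_right (neg_nonpos.2 h)]; ring

lemma erealPosNeg_add_le (x y : EReal) :
    erealPos (-(x + y)) ≤ erealPos (-x) + erealPos (-y) := by
  induction x using EReal.rec with
  | bot => simp [EReal.bot_add, EReal.neg_bot, erealPos_top]
  | top =>
      induction y using EReal.rec with
      | bot => simp [EReal.add_bot, EReal.neg_bot, EReal.neg_top, erealPos_top, erealPos_bot]
      | coe y => simp [EReal.top_add_of_ne_bot (EReal.coe_ne_bot y), EReal.neg_top,
          erealPos_bot]
      | top => simp [EReal.neg_top, erealPos_bot]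
  | coe x =>
      induction y using EReal.rec with
      | bot => simp [EReal.add_bot, EReal.neg_bot, erealPos_top]
      | top => simp [EReal.top_add_of_ne_bot (EReal.coe_ne_bot x), add_comm,
          EReal.neg_top, erealPos_bot]
      | coe y =>
          rw [← EReal.coe_add, ← EReal.coe_neg, ← EReal.coe_neg, ← EReal.coe_neg,
            erealPos_coe, erealPos_coe, erealPos_coe, neg_add]
          exact ENNReal.ofReal_add_le

lemma erealPos_add_identity (x y : EReal) :
    erealPos (x + y) + (erealPos (-x) + erealPos (-y))
      = erealPos (-(x + y)) + (erealPos x + erealPos y) := by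
  induction x using EReal.rec with
  | bot => simp [EReal.bot_add, EReal.neg_bot, erealPos_top, erealPos_bot]
  | top =>
      induction y using EReal.rec with
      | bot => simp [EReal.add_bot, EReal.neg_bot, EReal.neg_top, erealPos_top, erealPos_bot]
      | coe y => simp [EReal.top_add_of_ne_bot (EReal.coe_ne_bot y), EReal.neg_top,
          erealPos_top, erealPos_bot]
      | top => simp [EReal.neg_top, erealPos_top, erealPos_bot]
  | coe x =>
      induction y using EReal.rec with
      | bot => simp [EReal.add_bot, EReal.neg_bot, erealPos_top, erealPos_bot]
      | top => simp [EReal.top_add_of_ne_bot (EReal.coe_ne_bot x), EReal.neg_top,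
          erealPos_top, erealPos_bot]
      | coe y =>
          rw [← EReal.coe_add, ← EReal.coe_neg, ← EReal.coe_neg, ← EReal.coe_neg,
            erealPos_coe, erealPos_coe, erealPos_coe, erealPos_coe, erealPos_coe,
            erealPos_coe]
          rw [ofReal_max_zero (x + y), ofReal_max_zero (-x), ofReal_max_zero (-y),
            ofReal_max_zero (-(x + y)), ofReal_max_zero x, ofReal_max_zero y,
            ← ENNReal.ofReal_add (le_max_right _ _) (le_max_right _ _),
            ← ENNReal.ofReal_add (le_max_right _ _) (le_max_right _ _),
            ← ENNReal.ofReal_add (le_max_right _ _) (by positivity),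
            ← ENNReal.ofReal_add (le_max_right _ _) (by positivity)]
          congr 1
          have h1 := max_zero_pt (x + y)
          have h2 := max_zero_pt x
          have h3 := max_zero_pt y
          linarith

/-- Coercion of a finite `ℝ≥0∞` to `EReal` equals the coercion of its `toReal`. -/
lemma coe_ennreal_eq_coe_toReal {b : ℝ≥0∞} (hb : b ≠ ⊤) :
    (b : EReal) = ((b.toReal : ℝ) : EReal) := by
  rw [← EReal.toReal_coe_ennreal (x := b)]
  exact (EReal.coe_toReal (by simpa using hb) (EReal.coe_ennreal_ne_bot b)).symm

lemma ereal_sub_le_sub_of_add_le {a b c d : ℝ≥0∞} (hb : b ≠ ⊤) (hd : d ≠ ⊤)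
    (h : c + b ≤ a + d) : (c : EReal) - (d : EReal) ≤ (a : EReal) - (b : EReal) := by
  rcases eq_or_ne a ⊤ with rfl | ha
  · rw [coe_ennreal_eq_coe_toReal hb, EReal.coe_ennreal_top, EReal.top_sub_coe]
    exact le_top
  · rcases eq_or_ne c ⊤ with rfl | hc
    · exfalso
      have had : a + d = ⊤ := top_le_iff.1 (le_trans (by simp) h)
      exact ha (by simpa [hd] using had)
    · have had : a + d ≠ ⊤ := by simp [ha, hd]
      have hr := ENNReal.toReal_mono had h
      rw [ENNReal.toReal_add hc hb, ENNReal.toReal_add ha hd] at hr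
      rw [coe_ennreal_eq_coe_toReal hb, coe_ennreal_eq_coe_toReal hd,
        coe_ennreal_eq_coe_toReal ha, coe_ennreal_eq_coe_toReal hc,
        ← EReal.coe_sub, ← EReal.coe_sub, EReal.coe_le_coe_iff]
      linarith

lemma ereal_sub_add_sub_le {a b c d : ℝ≥0∞} (hb : b ≠ ⊤) (hd : d ≠ ⊤) :
    ((a : EReal) - (b : EReal)) + ((c : EReal) - (d : EReal))
      ≤ ((a + c : ℝ≥0∞) : EReal) - ((b + d : ℝ≥0∞) : EReal) := by
  have hbd : b + d ≠ ⊤ := by simp [hb, hd]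
  rcases eq_or_ne a ⊤ with rfl | ha
  · rw [coe_ennreal_eq_coe_toReal hbd, show (⊤ + c : ℝ≥0∞) = ⊤ from by simp,
      EReal.coe_ennreal_top, EReal.top_sub_coe]
    exact le_top
  · rcases eq_or_ne c ⊤ with rfl | hc
    · rw [coe_ennreal_eq_coe_toReal hbd, show (a + ⊤ : ℝ≥0∞) = ⊤ from by simp,
        EReal.coe_ennreal_top, EReal.top_sub_coe]
      exact le_top
    · have hac : a + c ≠ ⊤ := by simp [ha, hc]
      rw [coe_ennreal_eq_coe_toReal hb, coe_ennreal_eq_coe_toReal hd,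
        coe_ennreal_eq_coe_toReal ha, coe_ennreal_eq_coe_toReal hc,
        coe_ennreal_eq_coe_toReal hbd, coe_ennreal_eq_coe_toReal hac,
        ENNReal.toReal_add ha hc, ENNReal.toReal_add hb hd,
        ← EReal.coe_sub, ← EReal.coe_sub, ← EReal.coe_sub, ← EReal.coe_add,
        EReal.coe_le_coe_iff]
      linarith

lemma ereal_mul_sub_eq {a b : ℝ≥0∞} (hb : b ≠ ⊤) {t : ℝ} (ht : 0 < t) :
    (t : EReal) * ((a : EReal) - (b : EReal))
      = ((ENNReal.ofReal t * a : ℝ≥0∞) : EReal) - ((ENNReal.ofReal t * b : ℝ≥0∞) : EReal) := by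
  have htb : ENNReal.ofReal t * b ≠ ⊤ := ENNReal.mul_ne_top ENNReal.ofReal_ne_top hb
  rcases eq_or_ne a ⊤ with rfl | ha
  · rw [coe_ennreal_eq_coe_toReal hb, EReal.coe_ennreal_top, EReal.top_sub_coe,
      EReal.coe_mul_top_of_pos ht, ENNReal.mul_top (ENNReal.ofReal_pos.2 ht).ne',
      coe_ennreal_eq_coe_toReal htb, EReal.coe_ennreal_top, EReal.top_sub_coe]
  · have hta : ENNReal.ofReal t * a ≠ ⊤ := ENNReal.mul_ne_top ENNReal.ofReal_ne_top ha
    rw [coe_ennreal_eq_coe_toReal hb, coe_ennreal_eq_coe_toReal ha,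
      coe_ennreal_eq_coe_toReal hta, coe_ennreal_eq_coe_toReal htb,
      ENNReal.toReal_mul, ENNReal.toReal_mul, ENNReal.toReal_ofReal ht.le,
      ← EReal.coe_sub, ← EReal.coe_sub, ← EReal.coe_mul]
    rw [mul_sub]

lemma eexp_mono {Ω : Type*} [MeasurableSpace Ω] (P : Measure Ω) {ξ η : Ω → EReal}
    (h : ∀ ω, ξ ω ≤ η ω) : eexp P ξ ≤ eexp P η := by
  have hp : (∫⁻ ω, erealPos (ξ ω) ∂P) ≤ ∫⁻ ω, erealPos (η ω) ∂P :=
    lintegral_mono fun ω => erealPos_mono (h ω)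
  have hn : (∫⁻ ω, erealPos (-(η ω)) ∂P) ≤ ∫⁻ ω, erealPos (-(ξ ω)) ∂P :=
    lintegral_mono fun ω => erealPos_mono (EReal.neg_le_neg_iff.2 (h ω))
  unfold eexp
  split_ifs with h1 h2 h2
  · exact le_rfl
  · exact bot_le
  · exact absurd (top_le_iff.1 (h2 ▸ hn)) h1
  · exact EReal.sub_le_sub (EReal.coe_ennreal_le_coe_ennreal_iff.2 hp)
      (EReal.coe_ennreal_le_coe_ennreal_iff.2 hn)

lemma eexp_combo {Ω : Type*} [MeasurableSpace Ω] (P : Measure Ω) {ξ₁ ξ₂ : Ω → EReal}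
    (h₁ : Measurable ξ₁) (h₂ : Measurable ξ₂) {t : ℝ} (ht : 0 < t) (ht' : t < 1) :
    (t : EReal) * eexp P ξ₁ + ((1 - t : ℝ) : EReal) * eexp P ξ₂ ≤
      eexp P (fun ω => (t : EReal) * ξ₁ ω + ((1 - t : ℝ) : EReal) * ξ₂ ω) := by
  have hs : 0 < 1 - t := by linarith
  set s : ℝ := 1 - t with hs_def
  by_cases h1 : (∫⁻ ω, erealPos (-(ξ₁ ω)) ∂P) = ⊤
  · have hb : eexp P ξ₁ = ⊥ := by unfold eexp; rw [if_pos h1]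
    rw [hb, EReal.coe_mul_bot_of_pos ht, EReal.bot_add]
    exact bot_le
  by_cases h2 : (∫⁻ ω, erealPos (-(ξ₂ ω)) ∂P) = ⊤
  · have hb : eexp P ξ₂ = ⊥ := by unfold eexp; rw [if_pos h2]
    rw [hb, EReal.coe_mul_bot_of_pos hs, EReal.add_bot]
    exact bot_le
  set T := ENNReal.ofReal t with hT_def
  set S := ENNReal.ofReal s with hS_def
  have hT : T ≠ ⊤ := ENNReal.ofReal_ne_top
  have hS : S ≠ ⊤ := ENNReal.ofReal_ne_top
  have mp₁ : Measurable fun ω => erealPos (ξ₁ ω) := measurable_erealPos.comp h₁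
  have mp₂ : Measurable fun ω => erealPos (ξ₂ ω) := measurable_erealPos.comp h₂
  have mn₁ : Measurable fun ω => erealPos (-(ξ₁ ω)) := measurable_erealPosNeg.comp h₁
  have mn₂ : Measurable fun ω => erealPos (-(ξ₂ ω)) := measurable_erealPosNeg.comp h₂
  set ζ : Ω → EReal := fun ω => (t : EReal) * ξ₁ ω + (s : EReal) * ξ₂ ω with hζ_def
  set p₁ := ∫⁻ ω, erealPos (ξ₁ ω) ∂P with hp₁
  set p₂ := ∫⁻ ω, erealPos (ξ₂ ω) ∂P with hp₂
  set n₁ := ∫⁻ ω, erealPos (-(ξ₁ ω)) ∂P with hn₁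
  set n₂ := ∫⁻ ω, erealPos (-(ξ₂ ω)) ∂P with hn₂
  set pζ := ∫⁻ ω, erealPos (ζ ω) ∂P with hpζ
  set nζ := ∫⁻ ω, erealPos (-(ζ ω)) ∂P with hnζ
  have hscaled_n : (∫⁻ ω, (T * erealPos (-(ξ₁ ω)) + S * erealPos (-(ξ₂ ω))) ∂P)
      = T * n₁ + S * n₂ := by
    rw [lintegral_add_left (mn₁.const_mul T), lintegral_const_mul T mn₁,
      lintegral_const_mul S mn₂]
  have hscaled_p : (∫⁻ ω, (T * erealPos (ξ₁ ω) + S * erealPos (ξ₂ ω)) ∂P)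
      = T * p₁ + S * p₂ := by
    rw [lintegral_add_left (mp₁.const_mul T), lintegral_const_mul T mp₁,
      lintegral_const_mul S mp₂]
  have hNfin : T * n₁ + S * n₂ ≠ ⊤ :=
    ENNReal.add_ne_top.2 ⟨ENNReal.mul_ne_top hT h1, ENNReal.mul_ne_top hS h2⟩
  have hn_le : nζ ≤ T * n₁ + S * n₂ := by
    rw [← hscaled_n]
    refine lintegral_mono fun ω => ?_
    calc erealPos (-(ζ ω)) ≤ erealPos (-((t : EReal) * ξ₁ ω)) + erealPos (-((s : EReal) * ξ₂ ω)) :=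
          erealPosNeg_add_le _ _
      _ = T * erealPos (-(ξ₁ ω)) + S * erealPos (-(ξ₂ ω)) := by
          rw [erealPos_neg_mul ht, erealPos_neg_mul hs]
  have hnζ_ne : nζ ≠ ⊤ := fun h => hNfin (top_le_iff.1 (h ▸ hn_le))
  have hEq : pζ + (T * n₁ + S * n₂) = nζ + (T * p₁ + S * p₂) := by
    rw [← hscaled_n, ← hscaled_p, ← lintegral_add_right _ (show Measurable fun ω => T * erealPos (-(ξ₁ ω)) + S * erealPos (-(ξ₂ ω)) from (mn₁.const_mul T).add
      (mn₂.const_mul S)), ← lintegral_add_right _ (show Measurable fun ω => T * erealPos (ξ₁ ω) + S * erealPos (ξ₂ ω) from (mp₁.const_mul T).add (mp₂.const_mul S))]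
    refine lintegral_congr fun ω => ?_
    have := erealPos_add_identity ((t : EReal) * ξ₁ ω) ((s : EReal) * ξ₂ ω)
    rw [erealPos_mul ht, erealPos_mul hs, erealPos_neg_mul ht, erealPos_neg_mul hs] at this
    exact this
  have heexp₁ : eexp P ξ₁ = (p₁ : EReal) - (n₁ : EReal) := by unfold eexp; rw [if_neg h1]
  have heexp₂ : eexp P ξ₂ = (p₂ : EReal) - (n₂ : EReal) := by unfold eexp; rw [if_neg h2]
  have heexpζ : eexp P ζ = (pζ : EReal) - (nζ : EReal) := by unfold eexp; rw [if_neg hnζ_ne]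
  rw [heexp₁, heexp₂]
  show (t : EReal) * ((p₁ : EReal) - (n₁ : EReal)) + (s : EReal) * ((p₂ : EReal) - (n₂ : EReal))
      ≤ eexp P ζ
  rw [heexpζ, ereal_mul_sub_eq h1 ht, ereal_mul_sub_eq h2 hs, ← hT_def, ← hS_def]
  calc ((T * p₁ : ℝ≥0∞) : EReal) - ((T * n₁ : ℝ≥0∞) : EReal)
        + (((S * p₂ : ℝ≥0∞) : EReal) - ((S * n₂ : ℝ≥0∞) : EReal))
      ≤ ((T * p₁ + S * p₂ : ℝ≥0∞) : EReal) - ((T * n₁ + S * n₂ : ℝ≥0∞) : EReal) :=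
        ereal_sub_add_sub_le (ENNReal.mul_ne_top hT h1) (ENNReal.mul_ne_top hS h2)
    _ ≤ (pζ : EReal) - (nζ : EReal) := by
        refine ereal_sub_le_sub_of_add_le hnζ_ne hNfin ?_
        rw [add_comm (T * p₁ + S * p₂) nζ, ← hEq, add_comm pζ (T * n₁ + S * n₂)]

end Aux

theorem stmt_1
    {Ω : Type*} [MeasurableSpace Ω] (P : Measure Ω) [IsProbabilityMeasure P]
    (U U' : ℝ → ℝ)
    (hU_concave : StrictConcaveOn ℝ (Ioi 0) U)
    (hU_mono : StrictMonoOn U (Ioi 0))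
    (hU_deriv : ∀ x ∈ Ioi (0 : ℝ), HasDerivAt U (U' x) x)
    (hU'_cont : ContinuousOn U' (Ioi 0))
    (hInada_zero : Tendsto U' (𝓝[>] 0) atTop)
    (hInada_infty : Tendsto U' atTop (𝓝 0))
    (E : Set (Ω → ℝ))
    (hE_meas : ∀ g ∈ E, Measurable g)
    (hE_nonneg : ∀ g ∈ E, ∀ ω, 0 ≤ g ω)
    (hE_convex : ∀ g₁ ∈ E, ∀ g₂ ∈ E, ∀ t : ℝ, 0 ≤ t → t ≤ 1 →
      (fun ω => t * g₁ ω + (1 - t) * g₂ ω) ∈ E) :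
    ∀ x₁ > (0 : ℝ), ∀ x₂ > (0 : ℝ), ∀ t : ℝ, 0 < t → t < 1 →
      ((t : ℝ) : EReal) * (⨆ g ∈ E, eexp P (fun ω => Uext U (x₁ * g ω))) +
          ((1 - t : ℝ) : EReal) * (⨆ g ∈ E, eexp P (fun ω => Uext U (x₂ * g ω))) ≤
        ⨆ g ∈ E, eexp P (fun ω => Uext U ((t * x₁ + (1 - t) * x₂) * g ω)) := by
  intro x₁ hx₁ x₂ hx₂ t ht ht'
  have hs : (0 : ℝ) < 1 - t := by linarith
  set c : EReal := ⨅ y : {y : ℝ // 0 < y}, ((U (y : ℝ) : ℝ) : EReal) with hc_def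
  have hc_le : ∀ y : ℝ, 0 < y → c ≤ ((U y : ℝ) : EReal) := fun y hy =>
    iInf_le _ (⟨y, hy⟩ : {y : ℝ // 0 < y})
  have hc_ne_top : c ≠ ⊤ := fun h =>
    (EReal.coe_ne_top (U 1)) (top_le_iff.1 (h ▸ hc_le 1 one_pos))
  have hUext_pos : ∀ x : ℝ, 0 < x → Uext U x = ((U x : ℝ) : EReal) := fun x hx => if_pos hx
  have hUext_zero : Uext U 0 = c := if_neg (lt_irrefl 0)
  have hUmono : Monotone (Uext U) := by
    intro y z h
    unfold Uext
    split_ifs with hy hz hz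
    · exact EReal.coe_le_coe_iff.2 (hU_mono.monotoneOn hy hz h)
    · exact absurd (lt_of_lt_of_le hy h) hz
    · exact hc_le z hz
    · exact le_rfl
  have hUmeas : Measurable (Uext U) := hUmono.measurable
  have hU_cont : ∀ x ∈ Ioi (0 : ℝ), ContinuousAt U x := fun x hx =>
    (hU_deriv x hx).continuousAt
  -- the key limit lemma
  have hlim : ∀ b : ℝ, 0 < b → ∀ τ : ℝ, 0 < τ → τ < 1 →
      (τ : EReal) * c + ((1 - τ : ℝ) : EReal) * ((U b : ℝ) : EReal)
        ≤ ((U ((1 - τ) * b) : ℝ) : EReal) := by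
    intro b hb τ hτ hτ'
    rcases ereal_ne_top_cases c hc_ne_top with hcv | ⟨r, hcv⟩
    · rw [hcv, EReal.coe_mul_bot_of_pos hτ, EReal.bot_add]; exact bot_le
    · rw [hcv]
      have hr : ∀ ε : ℝ, 0 < ε → r ≤ U ε := fun ε hε =>
        EReal.coe_le_coe_iff.1 (hcv ▸ hc_le ε hε)
      have hσ : (0 : ℝ) < 1 - τ := by linarith
      have hreal : τ * r + (1 - τ) * U b ≤ U ((1 - τ) * b) := by
        have h1 : Tendsto (fun ε : ℝ => τ * ε + (1 - τ) * b) (𝓝[>] 0) (𝓝 ((1 - τ) * b)) := by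
          have hcont : Continuous fun ε : ℝ => τ * ε + (1 - τ) * b :=
            (continuous_const.mul continuous_id).add continuous_const
          have := (hcont.tendsto 0).mono_left (nhdsWithin_le_nhds (s := Ioi (0 : ℝ)))
          simpa using this
        have h2 : Tendsto (fun ε : ℝ => U (τ * ε + (1 - τ) * b)) (𝓝[>] 0) (𝓝 (U ((1 - τ) * b))) :=
          (hU_cont _ (mem_Ioi.2 (mul_pos hσ hb))).tendsto.comp h1
        refine ge_of_tendsto h2 ?_
        filter_upwards [self_mem_nhdsWithin] with ε hε
        have hε' : (0 : ℝ) < ε := hε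
        have hcc := hU_concave.concaveOn.2 (by exact hε' : ε ∈ Ioi (0 : ℝ))
          (by exact hb : b ∈ Ioi (0 : ℝ)) hτ.le hσ.le (by ring)
        simp only [smul_eq_mul] at hcc
        have hre := mul_le_mul_of_nonneg_left (hr ε hε') hτ.le
        linarith
      rw [← EReal.coe_mul, ← EReal.coe_mul, ← EReal.coe_add]
      exact EReal.coe_le_coe_iff.2 hreal
  -- pointwise concavity of Uext
  have hUkey : ∀ a b : ℝ, 0 ≤ a → 0 ≤ b →
      (t : EReal) * Uext U a + ((1 - t : ℝ) : EReal) * Uext U b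
        ≤ Uext U (t * a + (1 - t) * b) := by
    intro a b ha hb
    rcases ha.eq_or_lt with rfl | ha'
    · rcases hb.eq_or_lt with rfl | hb'
      · rw [show t * 0 + (1 - t) * 0 = 0 by ring, hUext_zero]
        rcases ereal_ne_top_cases c hc_ne_top with hcv | ⟨r, hcv⟩
        · rw [hcv, EReal.coe_mul_bot_of_pos ht, EReal.bot_add]
        · rw [hcv]
          rw [← EReal.coe_mul, ← EReal.coe_mul, ← EReal.coe_add]
          exact EReal.coe_le_coe_iff.2 (by nlinarith)
      · rw [show t * 0 + (1 - t) * b = (1 - t) * b by ring, hUext_zero,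
          hUext_pos b hb', hUext_pos _ (mul_pos hs hb')]
        exact hlim b hb' t ht ht'
    · rcases hb.eq_or_lt with rfl | hb'
      · have := hlim a ha' (1 - t) hs (by linarith)
        rw [sub_sub_cancel] at this
        rw [show t * a + (1 - t) * 0 = t * a by ring, hUext_zero,
          hUext_pos a ha', hUext_pos _ (mul_pos ht ha'), add_comm]
        exact this
      · rw [hUext_pos a ha', hUext_pos b hb',
          hUext_pos _ (add_pos (mul_pos ht ha') (mul_pos hs hb'))]
        have hcc := hU_concave.concaveOn.2 (by exact ha' : a ∈ Ioi (0 : ℝ))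
          (by exact hb' : b ∈ Ioi (0 : ℝ)) ht.le (by linarith : (0:ℝ) ≤ 1 - t) (by ring)
        simp only [smul_eq_mul] at hcc
        rw [← EReal.coe_mul, ← EReal.coe_mul, ← EReal.coe_add]
        exact EReal.coe_le_coe_iff.2 hcc
  set X : ℝ := t * x₁ + (1 - t) * x₂ with hX_def
  have hXpos : 0 < X := add_pos (mul_pos ht hx₁) (mul_pos hs hx₂)
  -- core inequality for two elements of E
  have hcore : ∀ g₁ ∈ E, ∀ g₂ ∈ E,
      (t : EReal) * eexp P (fun ω => Uext U (x₁ * g₁ ω)) +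
        ((1 - t : ℝ) : EReal) * eexp P (fun ω => Uext U (x₂ * g₂ ω))
      ≤ ⨆ g ∈ E, eexp P (fun ω => Uext U (X * g ω)) := by
    intro g₁ hg₁ g₂ hg₂
    set σ : ℝ := t * x₁ / X with hσ_def
    have hσ0 : 0 ≤ σ := div_nonneg (mul_pos ht hx₁).le hXpos.le
    have hσ1 : σ ≤ 1 := by
      rw [hσ_def, div_le_one hXpos]
      nlinarith
    have hgE := hE_convex g₁ hg₁ g₂ hg₂ σ hσ0 hσ1
    have hm₁ : Measurable fun ω => Uext U (x₁ * g₁ ω) :=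
      hUmeas.comp ((hE_meas g₁ hg₁).const_mul x₁)
    have hm₂ : Measurable fun ω => Uext U (x₂ * g₂ ω) :=
      hUmeas.comp ((hE_meas g₂ hg₂).const_mul x₂)
    have key1 := eexp_combo P hm₁ hm₂ ht ht'
    have key2 : eexp P (fun ω => (t : EReal) * Uext U (x₁ * g₁ ω) +
        ((1 - t : ℝ) : EReal) * Uext U (x₂ * g₂ ω))
        ≤ eexp P (fun ω => Uext U (X * (σ * g₁ ω + (1 - σ) * g₂ ω))) := by
      refine eexp_mono P fun ω => ?_
      have harg : X * (σ * g₁ ω + (1 - σ) * g₂ ω)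
          = t * (x₁ * g₁ ω) + (1 - t) * (x₂ * g₂ ω) := by
        rw [hσ_def]
        field_simp
        ring
      rw [harg]
      exact hUkey _ _ (mul_nonneg hx₁.le (hE_nonneg g₁ hg₁ ω))
        (mul_nonneg hx₂.le (hE_nonneg g₂ hg₂ ω))
    refine (key1.trans key2).trans ?_
    exact le_iSup₂ (f := fun g (_ : g ∈ E) => eexp P (fun ω => Uext U (X * g ω))) _ hgE
  -- pass to suprema
  refine EReal.add_le_of_forall_lt ?_
  intro a ha b hb
  induction a using EReal.rec with
  | bot => rw [EReal.bot_add]; exact bot_le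
  | top => exact absurd ha (not_top_lt)
  | coe x =>
    induction b using EReal.rec with
    | bot => rw [EReal.add_bot]; exact bot_le
    | top => exact absurd hb (not_top_lt)
    | coe y =>
      have hget : ∀ (z τ : ℝ) (x' : ℝ), 0 < τ →
          ((z : EReal)) < (τ : EReal) * (⨆ g ∈ E, eexp P (fun ω => Uext U (x' * g ω))) →
          ∃ g, ∃ _ : g ∈ E, (z : EReal) ≤ (τ : EReal) * eexp P (fun ω => Uext U (x' * g ω)) := by
        intro z τ x' hτ hz
        by_contra hcon
        push_neg at hcon
        have hb' : (⨆ g ∈ E, eexp P (fun ω => Uext U (x' * g ω))) ≤ ((z / τ : ℝ) : EReal) := by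
          refine iSup₂_le fun g hg => ?_
          rw [EReal.coe_div, EReal.le_div_iff_mul_le (EReal.coe_pos.2 hτ) (EReal.coe_ne_top τ),
            mul_comm]
          exact le_of_lt (hcon g hg)
        have := mul_le_mul_of_nonneg_left hb' (EReal.coe_nonneg.2 hτ.le)
        rw [← EReal.coe_mul, mul_div_cancel₀ z hτ.ne'] at this
        exact absurd (lt_of_lt_of_le hz this) (lt_irrefl _)
      obtain ⟨g₁, hg₁, hx⟩ := hget x t x₁ ht ha
      obtain ⟨g₂, hg₂, hy⟩ := hget y (1 - t) x₂ hs hb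
      calc ((x : EReal)) + (y : EReal)
          ≤ (t : EReal) * eexp P (fun ω => Uext U (x₁ * g₁ ω)) +
            ((1 - t : ℝ) : EReal) * eexp P (fun ω => Uext U (x₂ * g₂ ω)) := add_le_add hx hy
        _ ≤ ⨆ g ∈ E, eexp P (fun ω => Uext U (X * g ω)) := hcore g₁ hg₁ g₂ hg₂
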